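/- arXiv:0911.5377 — 2 statements merged into one kernel-verified Lean document; each statement's English description precedes it below -/
import Mathlib

section
/- Let (Ω, F, P) be a probability space, let W : Ω → {0,1} be a random variable, let G ⊆ F be a sub-σ-algebra, and let U : Ω → [0,1] be uniformly distributed on [0,1] and independent of the σ-algebra σ(W) ∨ G. Then there exists a {0,1}-valued random variable C, measurable with respect to σ(W) ∨ G ∨ σ(U), such that: (i) W ⊕ C ~ Bernoulli(1/2); (ii) W ⊕ C is independent of G; and (iii) P(C = 1) = E[ | P(W = 0 | G) − 1/2 | ]. -/
open MeasureTheory ProbabilityTheory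

/-- The Bernoulli measure on `Bool` assigning mass `r` to `true`. -/
noncomputable def bernoulliMeasure (r : ℝ) : Measure Bool :=
  ENNReal.ofReal r • Measure.dirac true + ENNReal.ofReal (1 - r) • Measure.dirac false

/-- `μ` is the product of Bernoulli(`r`) measures over the index set `I`:
it is a probability measure whose finite-dimensional marginals are i.i.d. Bernoulli(`r`). -/
def IsBernoulliProduct {I : Type*} (r : ℝ) (μ : Measure (I → Bool)) : Prop :=
  IsProbabilityMeasure μ ∧
    ∀ (s : Finset I) (b : I → Bool),
      μ {x | ∀ i ∈ s, x i = b i} =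
        ∏ i ∈ s, (if b i then ENNReal.ofReal r else ENNReal.ofReal (1 - r))

/-!
Let `p = P(W = false | G)`. Knowing `(W, G)`, flip `W` with probability `flipProb p` if
`W = false` and `flipProb (1 - p)` if `W = true`, where `flipProb x = (x - 1/2)⁺ / x`; the flip is
`C = 1{U < threshold}`. As `U` is uniform and independent of `σ(W) ∨ G`, the event `{U < t}` has
conditional probability `t` given `σ(W) ∨ G` for every `σ(W) ∨ G`-measurable `t`. Averaging over `W`
given `G` then yields
`P(W ⊕ C = true | G) = p · flipProb p + (1 - p) (1 - flipProb (1 - p)) = 1/2`, which gives both the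
law of `W ⊕ C` and its independence from `G`, and
`P(C = true | G) = p · flipProb p + (1 - p) · flipProb (1 - p) = |p - 1/2|`.
-/

lemma norm_le_one_of_mem_Icc {x : ℝ} (hx : x ∈ Set.Icc 0 1) : ‖x‖ ≤ 1 := by
  rw [Real.norm_of_nonneg hx.1]; exact hx.2

theorem Measurable.decide_lt {α β : Type*} {mα : MeasurableSpace α} [TopologicalSpace β]
    [MeasurableSpace β] [OpensMeasurableSpace β] [LinearOrder β] [SecondCountableTopology β]
    [OrderClosedTopology β] {f g : α → β} (hf : Measurable f) (hg : Measurable g) :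
    Measurable fun a => decide (f a < g a) :=
  measurable_to_bool (by simpa only [Set.preimage, Set.mem_singleton_iff, decide_eq_true_eq]
    using measurableSet_lt hf hg)

theorem ProbabilityTheory.IndepFun.measure_preimage_prodMk {Ω α β : Type*} {mΩ : MeasurableSpace Ω}
    [MeasurableSpace α] [MeasurableSpace β] {μ : Measure Ω} [IsFiniteMeasure μ]
    {U : Ω → α} {Y : Ω → β} (hUY : IndepFun U Y μ) (hU : Measurable U) (hY : Measurable Y)
    {S : Set (α × β)} (hS : MeasurableSet S) :
    μ ((fun ω => (U ω, Y ω)) ⁻¹' S) = ∫⁻ ω, μ.map U ((fun u => (u, Y ω)) ⁻¹' S) ∂μ := by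
  rw [← Measure.map_apply (hU.prodMk hY) hS,
    (indepFun_iff_map_prod_eq_prod_map_map hU.aemeasurable hY.aemeasurable).1 hUY,
    Measure.prod_apply_symm hS, lintegral_map (measurable_measure_prodMk_right hS) hY]

lemma volume_restrict_Icc_setOf_decide_lt {s : ℝ} (hs : s ∈ Set.Icc 0 1) (c : Bool) :
    volume.restrict (Set.Icc (0 : ℝ) 1) {u | decide (u < s) = c} =
      ENNReal.ofReal (if c then s else 1 - s) := by
  rw [Measure.restrict_apply' measurableSet_Icc]
  cases c
  · have : {u : ℝ | decide (u < s) = false} ∩ Set.Icc 0 1 = Set.Icc s 1 := by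
      ext u
      simp only [Set.mem_inter_iff, Set.mem_ofPred_eq, Set.mem_Icc, decide_eq_false_iff_not, not_lt]
      constructor
      · rintro ⟨h, -, h1⟩; exact ⟨h, h1⟩
      · rintro ⟨h, h1⟩; exact ⟨h, hs.1.trans h, h1⟩
    rw [this, Real.volume_Icc]; rfl
  · have : {u : ℝ | decide (u < s) = true} ∩ Set.Icc 0 1 = Set.Ico 0 s := by
      ext u
      simp only [Set.mem_inter_iff, Set.mem_ofPred_eq, Set.mem_Icc, Set.mem_Ico, decide_eq_true_eq]
      constructor
      · rintro ⟨h, h0, -⟩; exact ⟨h0, h⟩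
      · rintro ⟨h0, h⟩; exact ⟨h, h0, h.le.trans hs.2⟩
    rw [this, Real.volume_Ico, sub_zero]; rfl

lemma measureReal_inter_decide_lt_eq_setIntegral {Ω : Type*} {V m0 : MeasurableSpace Ω}
    {μ : Measure Ω} [IsFiniteMeasure μ] (hV : V ≤ m0) {U : Ω → ℝ} (hU : Measurable U)
    (hU_unif : μ.map U = volume.restrict (Set.Icc 0 1))
    (hUV : Indep (MeasurableSpace.comap U inferInstance) V μ)
    {t : Ω → ℝ} (ht : Measurable[V] t) (ht_mem : ∀ ω, t ω ∈ Set.Icc 0 1)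
    {b : Ω → Bool} (hb : Measurable[V] b) {B : Set Ω} (hB : MeasurableSet[V] B) :
    μ.real (B ∩ {ω | decide (U ω < t ω) = b ω}) = ∫ ω in B, (if b ω then t ω else 1 - t ω) ∂μ := by
  classical
  -- With `t`, `b` and `B` packed into `Y`, the event is a preimage under `(U, Y)`, whose law is a
  -- product by independence.
  set Y : Ω → ℝ × Bool × Bool := fun ω => (t ω, b ω, decide (ω ∈ B))
  have hYV : Measurable[V] Y :=
    ht.prodMk (hb.prodMk (measurable_to_bool (by simpa [Set.preimage] using hB)))
  have hUY : IndepFun U Y μ := indep_of_indep_of_le_right hUV hYV.comap_le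
  set S : Set (ℝ × ℝ × Bool × Bool) := {x | x.2.2.2 = true ∧ decide (x.1 < x.2.1) = x.2.2.1}
  have hS : MeasurableSet S :=
    (measurable_snd.snd.snd (measurableSet_singleton true)).inter
      (measurableSet_eq_fun (measurable_fst.decide_lt measurable_snd.fst) measurable_snd.snd.fst)
  have hpre : B ∩ {ω | decide (U ω < t ω) = b ω} = (fun ω => (U ω, Y ω)) ⁻¹' S := by
    ext ω; simp [S, Y, and_comm]
  have hslice (ω : Ω) : μ.map U ((fun u => (u, Y ω)) ⁻¹' S) =
      B.indicator (fun ω => ENNReal.ofReal (if b ω then t ω else 1 - t ω)) ω := by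
    by_cases hω : ω ∈ B
    · simp [S, Y, hω, hU_unif, volume_restrict_Icc_setOf_decide_lt (ht_mem ω)]
    · simp [S, Y, hω]
  have hprob_mem (ω : Ω) : (if b ω then t ω else 1 - t ω) ∈ Set.Icc 0 1 := by
    cases b ω <;> simp [(ht_mem ω).1, (ht_mem ω).2]
  have hint : Integrable (fun ω => if b ω then t ω else 1 - t ω) μ := by
    refine .of_bound (Measurable.ite (hb (measurableSet_singleton true)) ht
      (measurable_const.sub ht) |>.mono hV le_rfl).aestronglyMeasurable 1
      (ae_of_all _ fun ω => norm_le_one_of_mem_Icc (hprob_mem ω))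
  rw [measureReal_def, hpre, hUY.measure_preimage_prodMk hU (hYV.mono hV le_rfl) hS,
    lintegral_congr hslice, lintegral_indicator (hV _ hB),
    ← ofReal_integral_eq_lintegral_ofReal hint.integrableOn (ae_of_all _ fun ω => (hprob_mem ω).1),
    ENNReal.toReal_ofReal (setIntegral_nonneg (hV _ hB) fun ω _ => (hprob_mem ω).1)]

lemma indep_comap_of_measureReal_inter_eq_mul {Ω : Type*} {G m0 : MeasurableSpace Ω}
    {μ : Measure Ω} [IsProbabilityMeasure μ] (hG : G ≤ m0) {X : Ω → Bool} (hX : Measurable X)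
    (h : ∀ A, MeasurableSet[G] A →
      μ.real ({ω | X ω = true} ∩ A) = μ.real {ω | X ω = true} * μ.real A) :
    Indep (MeasurableSpace.comap X inferInstance) G μ := by
  set T := {ω | X ω = true}
  have hT : MeasurableSet T := hX (measurableSet_singleton true)
  have hX_gen : Measurable[MeasurableSpace.generateFrom {T}] X :=
    measurable_to_bool (MeasurableSpace.measurableSet_generateFrom rfl)
  refine indep_of_indep_of_le_left ?_ hX_gen.comap_le
  refine IndepSets.indep (MeasurableSpace.generateFrom_le (by simpa using hT)) hG
    (IsPiSystem.singleton T) (@MeasurableSpace.isPiSystem_measurableSet Ω G) rfl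
    (@MeasurableSpace.generateFrom_measurableSet Ω G).symm ?_
  rw [IndepSets_iff]
  rintro _ A rfl hA
  rw [← ENNReal.toReal_eq_toReal_iff' (measure_ne_top _ _)
    (ENNReal.mul_ne_top (measure_ne_top _ _) (measure_ne_top _ _)), ENNReal.toReal_mul]
  exact h A hA

lemma map_eq_bernoulliMeasure {Ω : Type*} {m0 : MeasurableSpace Ω}
    {μ : Measure Ω} [IsProbabilityMeasure μ] {X : Ω → Bool} (hX : Measurable X) {r : ℝ}
    (h : μ.real {ω | X ω = true} = r) : μ.map X = _root_.bernoulliMeasure r := by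
  have hT : MeasurableSet {ω | X ω = true} := hX (measurableSet_singleton true)
  refine Measure.ext_of_singleton fun c => ?_
  rw [Measure.map_apply hX (measurableSet_singleton c), ← ofReal_measureReal]
  cases c
  · have : X ⁻¹' {false} = {ω | X ω = true}ᶜ := by ext; simp
    simp [_root_.bernoulliMeasure, this, probReal_compl_eq_one_sub hT, h]
  · simp [_root_.bernoulliMeasure, Set.preimage, h]

lemma ae_condExp_mem_Icc {Ω : Type*} {G m0 : MeasurableSpace Ω}
    {μ : Measure Ω} [IsFiniteMeasure μ] (hG : G ≤ m0) {f : Ω → ℝ} (hf : Integrable f μ)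
    {a b : ℝ} (hf_mem : ∀ ω, f ω ∈ Set.Icc a b) :
    ∀ᵐ ω ∂μ, μ[f|G] ω ∈ Set.Icc a b := by
  have ha := condExp_mono (m := G) (integrable_const a) hf (ae_of_all _ fun ω => (hf_mem ω).1)
  have hb := condExp_mono (m := G) hf (integrable_const b) (ae_of_all _ fun ω => (hf_mem ω).2)
  rw [condExp_const hG] at ha hb
  filter_upwards [ha, hb] with ω ha hb using ⟨ha, hb⟩

lemma setIntegral_mul_condExp {Ω : Type*} {G m0 : MeasurableSpace Ω} {μ : Measure Ω}
    [IsFiniteMeasure μ] (hG : G ≤ m0) {q h : Ω → ℝ} (hq : Integrable q μ)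
    (hh : StronglyMeasurable[G] h) {c : ℝ} (hh_le : ∀ ω, ‖h ω‖ ≤ c) {A : Set Ω}
    (hA : MeasurableSet[G] A) :
    ∫ ω in A, h ω * q ω ∂μ = ∫ ω in A, h ω * μ[q|G] ω ∂μ := by
  rw [← setIntegral_condExp hG
    (hq.bdd_mul (hh.mono hG).aestronglyMeasurable (ae_of_all _ hh_le)) hA]
  exact setIntegral_congr_ae (hG _ hA) ((condExp_stronglyMeasurable_mul_of_bound hG hh hq c
    (ae_of_all _ hh_le)).mono fun ω hω _ => hω)

lemma setIntegral_mul_add_one_sub_mul_condExp {Ω : Type*} {G m0 : MeasurableSpace Ω}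
    {μ : Measure Ω} [IsFiniteMeasure μ] (hG : G ≤ m0) {q h₁ h₂ : Ω → ℝ} (hq : Integrable q μ)
    (hh₁ : StronglyMeasurable[G] h₁) (hh₂ : StronglyMeasurable[G] h₂) {c : ℝ}
    (hh₁_le : ∀ ω, ‖h₁ ω‖ ≤ c) (hh₂_le : ∀ ω, ‖h₂ ω‖ ≤ c) {A : Set Ω} (hA : MeasurableSet[G] A) :
    ∫ ω in A, q ω * h₁ ω + (1 - q ω) * h₂ ω ∂μ =
      ∫ ω in A, μ[q|G] ω * h₁ ω + (1 - μ[q|G] ω) * h₂ ω ∂μ := by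
  have hd_le (ω : Ω) : ‖(h₁ - h₂) ω‖ ≤ c + c :=
    (norm_sub_le _ _).trans (add_le_add (hh₁_le ω) (hh₂_le ω))
  have hh₂_int : Integrable h₂ μ :=
    .of_bound (hh₂.mono hG).aestronglyMeasurable c (ae_of_all _ hh₂_le)
  have split (r : Ω → ℝ) (hr : Integrable r μ) :
      ∫ ω in A, r ω * h₁ ω + (1 - r ω) * h₂ ω ∂μ =
        ∫ ω in A, h₂ ω ∂μ + ∫ ω in A, (h₁ - h₂) ω * r ω ∂μ := by
    rw [← integral_add hh₂_int.integrableOn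
      (hr.bdd_mul ((hh₁.sub hh₂).mono hG).aestronglyMeasurable (ae_of_all _ hd_le)).integrableOn]
    congr 1; ext ω; simp only [Pi.sub_apply]; ring
  rw [split q hq, split _ integrable_condExp,
    setIntegral_mul_condExp hG hq (hh₁.sub hh₂) hd_le hA]

-- At `x = 0` Lean's `x / 0 = 0` is harmless: the numerator vanishes for `x ≤ 1/2`.
noncomputable def flipProb (x : ℝ) : ℝ := max (x - 1 / 2) 0 / x

lemma measurable_flipProb : Measurable flipProb := by
  unfold flipProb; fun_prop

lemma flipProb_mem_Icc (x : ℝ) : flipProb x ∈ Set.Icc 0 1 := by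
  unfold flipProb
  rcases le_or_gt x (1 / 2) with hx | hx
  · rw [max_eq_right (by linarith), zero_div]
    exact ⟨le_rfl, zero_le_one⟩
  · rw [max_eq_left (by linarith)]
    exact ⟨div_nonneg (by linarith) (by linarith), div_le_one_of_le₀ (by linarith) (by linarith)⟩

lemma mul_flipProb {x : ℝ} (hx : 0 ≤ x) : x * flipProb x = max (x - 1 / 2) 0 := by
  rcases hx.eq_or_lt with rfl | hx
  · norm_num [flipProb]
  · exact mul_div_cancel₀ _ hx.ne'

lemma mul_flipProb_add_mul_flipProb_one_sub {x : ℝ} (hx : x ∈ Set.Icc 0 1) :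
    x * flipProb x + (1 - x) * flipProb (1 - x) = |x - 1 / 2| := by
  rw [mul_flipProb hx.1, mul_flipProb (sub_nonneg.2 hx.2)]
  rcases le_total x (1 / 2) with h | h
  · rw [abs_of_nonpos (by linarith), max_eq_right (by linarith), max_eq_left (by linarith)]; ring
  · rw [abs_of_nonneg (by linarith), max_eq_left (by linarith), max_eq_right (by linarith)]; ring

lemma mul_flipProb_add_mul_one_sub_flipProb_one_sub {x : ℝ} (hx : x ∈ Set.Icc 0 1) :
    x * flipProb x + (1 - x) * (1 - flipProb (1 - x)) = 1 / 2 := by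
  rw [mul_one_sub (1 - x), mul_flipProb hx.1, mul_flipProb (sub_nonneg.2 hx.2)]
  rcases le_total x (1 / 2) with h | h
  · rw [max_eq_right (by linarith), max_eq_left (by linarith)]; ring
  · rw [max_eq_left (by linarith), max_eq_right (by linarith)]; ring

noncomputable def condProbFalse {Ω : Type*} {m0 : MeasurableSpace Ω} (μ : Measure Ω)
    (G : MeasurableSpace Ω) (W : Ω → Bool) : Ω → ℝ :=
  μ[fun ω => if W ω = false then (1 : ℝ) else 0 | G]

noncomputable def flipThreshold {Ω : Type*} {m0 : MeasurableSpace Ω} (μ : Measure Ω)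
    (G : MeasurableSpace Ω) (W : Ω → Bool) (ω : Ω) : ℝ :=
  if W ω = false then flipProb (condProbFalse μ G W ω) else flipProb (1 - condProbFalse μ G W ω)

noncomputable def corrector {Ω : Type*} {m0 : MeasurableSpace Ω} (μ : Measure Ω)
    (G : MeasurableSpace Ω) (W : Ω → Bool) (U : Ω → ℝ) (ω : Ω) : Bool :=
  decide (U ω < flipThreshold μ G W ω)

section Corrector

variable {Ω : Type*} {G m0 : MeasurableSpace Ω} {μ : Measure Ω} {W : Ω → Bool} {U : Ω → ℝ}

lemma integrable_ite_eq_false [IsFiniteMeasure μ] (hW : Measurable W) :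
    Integrable (fun ω => if W ω = false then (1 : ℝ) else 0) μ :=
  .of_bound (Measurable.ite (hW (measurableSet_singleton false)) measurable_const
    measurable_const).aestronglyMeasurable 1 (ae_of_all _ fun ω => by split_ifs <;> simp)

lemma condProbFalse_mem_Icc [IsFiniteMeasure μ] (hW : Measurable W) (hG : G ≤ m0) :
    ∀ᵐ ω ∂μ, condProbFalse μ G W ω ∈ Set.Icc 0 1 :=
  ae_condExp_mem_Icc hG (integrable_ite_eq_false hW) fun ω => by
    by_cases h : W ω = false <;> simp [h]

lemma flipThreshold_mem_Icc (ω : Ω) : flipThreshold μ G W ω ∈ Set.Icc 0 1 := by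
  unfold flipThreshold; split_ifs <;> exact flipProb_mem_Icc _

lemma measurable_flipThreshold :
    Measurable[MeasurableSpace.comap W inferInstance ⊔ G] (flipThreshold μ G W) := by
  have hW : Measurable[MeasurableSpace.comap W inferInstance ⊔ G] W :=
    Measurable.of_comap_le le_sup_left
  have hp : Measurable[MeasurableSpace.comap W inferInstance ⊔ G] (condProbFalse μ G W) :=
    stronglyMeasurable_condExp.measurable.mono le_sup_right le_rfl
  exact Measurable.ite (hW (measurableSet_singleton false)) (measurable_flipProb.comp hp)
    (measurable_flipProb.comp (measurable_const.sub hp))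

lemma measurable_corrector :
    Measurable[MeasurableSpace.comap W inferInstance ⊔ G ⊔ MeasurableSpace.comap U inferInstance]
      (corrector μ G W U) :=
  ((comap_measurable U).mono le_sup_right le_rfl).decide_lt
    (measurable_flipThreshold.mono le_sup_left le_rfl)

lemma setIntegral_ite_eq_setIntegral_condProbFalse [IsFiniteMeasure μ] (hW : Measurable W)
    (hG : G ≤ m0) {f g : ℝ → ℝ} (hf : Measurable f) (hg : Measurable g) {c : ℝ}
    (hf_le : ∀ x, ‖f x‖ ≤ c) (hg_le : ∀ x, ‖g x‖ ≤ c) {A : Set Ω} (hA : MeasurableSet[G] A) :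
    ∫ ω in A, (if W ω = false then f (condProbFalse μ G W ω) else g (condProbFalse μ G W ω)) ∂μ =
      ∫ ω in A, condProbFalse μ G W ω * f (condProbFalse μ G W ω) +
        (1 - condProbFalse μ G W ω) * g (condProbFalse μ G W ω) ∂μ := by
  have hp : StronglyMeasurable[G] (condProbFalse μ G W) := stronglyMeasurable_condExp
  refine (setIntegral_congr_fun (hG _ hA) fun ω _ => ?_).trans
    (setIntegral_mul_add_one_sub_mul_condExp hG (integrable_ite_eq_false hW)
      (hf.comp hp.measurable).stronglyMeasurable (hg.comp hp.measurable).stronglyMeasurable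
      (fun ω => hf_le _) (fun ω => hg_le _) hA)
  by_cases h : W ω = false <;> simp [h]

lemma measureReal_xor_corrector_inter [IsProbabilityMeasure μ] (hW : Measurable W) (hG : G ≤ m0)
    (hU : Measurable U) (hU_unif : μ.map U = volume.restrict (Set.Icc (0 : ℝ) 1))
    (hU_indep : Indep (MeasurableSpace.comap U inferInstance)
      (MeasurableSpace.comap W inferInstance ⊔ G) μ) {A : Set Ω} (hA : MeasurableSet[G] A) :
    μ.real ({ω | xor (W ω) (corrector μ G W U ω) = true} ∩ A) = μ.real A / 2 := by
  have hWV : Measurable[MeasurableSpace.comap W inferInstance ⊔ G] W :=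
    Measurable.of_comap_le le_sup_left
  set p := condProbFalse μ G W
  calc μ.real ({ω | xor (W ω) (corrector μ G W U ω) = true} ∩ A)
      = μ.real (A ∩ {ω | decide (U ω < flipThreshold μ G W ω) = !W ω}) := by
        rw [Set.inter_comm]; congr 2; ext ω; cases h : W ω <;> simp [corrector, h]
    _ = ∫ ω in A, (if !W ω then flipThreshold μ G W ω else 1 - flipThreshold μ G W ω) ∂μ :=
        measureReal_inter_decide_lt_eq_setIntegral (sup_le hW.comap_le hG) hU hU_unif hU_indep
          measurable_flipThreshold flipThreshold_mem_Icc (by fun_prop)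
          ((le_sup_right : G ≤ _) A hA)
    _ = ∫ ω in A, (if W ω = false then flipProb (p ω) else 1 - flipProb (1 - p ω)) ∂μ :=
        setIntegral_congr_fun (hG _ hA) fun ω _ => by
          by_cases h : W ω = false <;> simp [flipThreshold, h, p]
    _ = ∫ ω in A, p ω * flipProb (p ω) + (1 - p ω) * (1 - flipProb (1 - p ω)) ∂μ :=
        setIntegral_ite_eq_setIntegral_condProbFalse hW hG measurable_flipProb
          (measurable_const.sub (measurable_flipProb.comp (measurable_const.sub measurable_id)))
          (fun x => norm_le_one_of_mem_Icc (flipProb_mem_Icc x))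
          (fun x => norm_le_one_of_mem_Icc (Set.Icc.mem_iff_one_sub_mem.1 (flipProb_mem_Icc _))) hA
    _ = ∫ ω in A, (1 / 2 : ℝ) ∂μ := setIntegral_congr_ae (hG _ hA)
        ((condProbFalse_mem_Icc hW hG).mono fun ω hω _ =>
          mul_flipProb_add_mul_one_sub_flipProb_one_sub hω)
    _ = μ.real A / 2 := by rw [setIntegral_const, smul_eq_mul]; ring

lemma measureReal_corrector_eq_true [IsProbabilityMeasure μ] (hW : Measurable W) (hG : G ≤ m0)
    (hU : Measurable U) (hU_unif : μ.map U = volume.restrict (Set.Icc (0 : ℝ) 1))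
    (hU_indep : Indep (MeasurableSpace.comap U inferInstance)
      (MeasurableSpace.comap W inferInstance ⊔ G) μ) :
    μ.real {ω | corrector μ G W U ω = true} = ∫ ω, |condProbFalse μ G W ω - 1 / 2| ∂μ := by
  have hnorm (x : ℝ) : ‖flipProb x‖ ≤ 1 := norm_le_one_of_mem_Icc (flipProb_mem_Icc x)
  set p := condProbFalse μ G W
  calc μ.real {ω | corrector μ G W U ω = true}
      = μ.real (Set.univ ∩ {ω | decide (U ω < flipThreshold μ G W ω) = true}) := by
        simp [corrector]
    _ = ∫ ω, flipThreshold μ G W ω ∂μ := by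
        rw [measureReal_inter_decide_lt_eq_setIntegral (sup_le hW.comap_le hG) hU hU_unif hU_indep
          measurable_flipThreshold flipThreshold_mem_Icc measurable_const MeasurableSet.univ]
        simp
    _ = ∫ ω, p ω * flipProb (p ω) + (1 - p ω) * flipProb (1 - p ω) ∂μ := by
        simpa only [Measure.restrict_univ, flipThreshold] using
          setIntegral_ite_eq_setIntegral_condProbFalse hW hG
          measurable_flipProb (g := fun x => flipProb (1 - x))
          (measurable_flipProb.comp (measurable_const.sub measurable_id)) hnorm (fun x => hnorm _)
          MeasurableSet.univ
    _ = ∫ ω, |p ω - 1 / 2| ∂μ := integral_congr_ae ((condProbFalse_mem_Icc hW hG).mono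
        fun ω hω => mul_flipProb_add_mul_flipProb_one_sub hω)

end Corrector

/-- Abstract corrector lemma: given a `{0,1}`-valued random variable `W`, a sub-σ-algebra `G`,
and a uniform `[0,1]` random variable `U` independent of `σ(W) ⊔ G`, there is a
`σ(W) ⊔ G ⊔ σ(U)`-measurable bit `C` with `W ⊕ C ~ Bernoulli(1/2)`, `W ⊕ C` independent of `G`,
and `P(C = 1) = E[|P(W = 0 | G) - 1/2|]`. -/
theorem abstract_corrector {Ω : Type*} [m0 : MeasurableSpace Ω]
    (μ : Measure Ω) [IsProbabilityMeasure μ]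
    (W : Ω → Bool) (hW : Measurable W)
    (U : Ω → ℝ) (hU : Measurable U)
    (hU_unif : μ.map U = volume.restrict (Set.Icc (0:ℝ) 1))
    (G : MeasurableSpace Ω) (hG : G ≤ m0)
    (hU_indep : Indep (MeasurableSpace.comap U inferInstance)
      ((MeasurableSpace.comap W inferInstance) ⊔ G) μ) :
    ∃ C : Ω → Bool,
      Measurable[(MeasurableSpace.comap W inferInstance) ⊔ G ⊔
        (MeasurableSpace.comap U inferInstance)] C ∧
      @Measure.map Ω Bool m0 inferInstance (fun ω => xor (W ω) (C ω)) μ =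
        _root_.bernoulliMeasure (1/2) ∧
      Indep (MeasurableSpace.comap (fun ω => xor (W ω) (C ω)) inferInstance) G μ ∧
      (μ {ω | C ω = true}).toReal =
        ∫ ω, |(μ[(fun ω => if W ω = false then (1:ℝ) else 0) | G]) ω - 1/2| ∂μ := by
  have hhalf (A : Set Ω) (hA : MeasurableSet[G] A) :=
    measureReal_xor_corrector_inter hW hG hU hU_unif hU_indep hA
  have hC : Measurable[m0] (corrector μ G W U) :=
    measurable_corrector.mono (sup_le (sup_le hW.comap_le hG) hU.comap_le) le_rfl
  have hX : Measurable[m0] fun ω => xor (W ω) (corrector μ G W U ω) :=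
    (measurable_of_countable fun b : Bool × Bool => xor b.1 b.2).comp (hW.prodMk hC)
  have hX_half : μ.real {ω | xor (W ω) (corrector μ G W U ω) = true} = 1 / 2 := by
    simpa using hhalf _ MeasurableSet.univ
  refine ⟨corrector μ G W U, measurable_corrector, map_eq_bernoulliMeasure hX hX_half,
    indep_comap_of_measureReal_inter_eq_mul hG hX fun A hA => ?_,
    measureReal_corrector_eq_true hW hG hU hU_unif hU_indep⟩
  rw [hhalf A hA, hX_half]; ring
end

section
/- Let 0 < p < 1, 0 < q < 1 and p' = p + q − pq, and let X ~ Bernoulli(p)^ℕ, Y ~ Bernoulli(q)^ℕ be independent. Fix an integer k ≥ 1, let a_k = X_1 ⊕ X_2 ⊕ ⋯ ⊕ X_k (the parity of the first k coordinates of X, valued in {0,1}), and let ℓ_k = Σ_{i=1}^{k} max(X_i, Y_i). Then almost surely E[ a_k | σ(max(X,Y)) ] = (1 − (1 − 2p/p')^{ℓ_k}) / 2. -/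
/-!
Write `a_k = (1 - (-1) ^ (X_1 + ⋯ + X_k)) / 2` and `c = 1 - 2p/p'`. It suffices to show that the
set integrals of `(-1) ^ (X_1 + ⋯ + X_k)` and `c ^ ℓ_k` agree on the cylinder sets
`{max (X_i, Y_i) = b_i for i ∈ s}`, since finite measures on `ℕ → Bool` are determined by their
values on cylinders. On such a set both integrands are products over coordinates of functions of
`(X_i, Y_i)`, and these pairs are i.i.d. with law `Bernoulli(p) ⊗ Bernoulli(q)`, so both integrals
factor. Coordinatewise `E[u(M) (-1) ^ X] = E[u(M) c ^ M]` for `M = max (X, Y)` and every `u`: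
given `M = 1`, `X = 1` with probability `p / p'`.
-/

open MeasureTheory ProbabilityTheory

lemma Finset.prod_mul_prod_eq_prod_union_ite {ι M : Type*} [CommMonoid M] [DecidableEq ι]
    (s t : Finset ι) (f g : ι → M) :
    (∏ i ∈ s, f i) * ∏ i ∈ t, g i =
      ∏ i ∈ s ∪ t, (if i ∈ s then f i else 1) * (if i ∈ t then g i else 1) := by
  rw [Finset.prod_mul_distrib, Finset.prod_ite_mem, Finset.prod_ite_mem,
    Finset.union_inter_cancel_left, Finset.union_inter_cancel_right]

lemma Finset.restrict_preimage_singleton_restrict {ι β : Type*} (s : Finset ι) (x : ι → β) :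
    s.restrict ⁻¹' ({s.restrict x} : Set (s → β)) = {z | ∀ i ∈ s, z i = x i} := by
  ext z
  simp [funext_iff]

namespace MeasureTheory.Measure

theorem ext_of_forall_cylinder_eq {ι β : Type*} [MeasurableSpace β] [Countable β]
    [MeasurableSingletonClass β] {ν ν' : Measure (ι → β)} [IsFiniteMeasure ν] [IsFiniteMeasure ν']
    (h : ∀ (s : Finset ι) (b : ι → β), ν {z | ∀ i ∈ s, z i = b i} = ν' {z | ∀ i ∈ s, z i = b i}) :
    ν = ν' := by
  refine IsProjectiveLimit.unique (P := fun s ↦ ν.map s.restrict) (fun _ ↦ rfl) fun s ↦ ?_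
  refine ext_iff_singleton.mpr fun b ↦ ?_
  rw [map_apply (Finset.measurable_restrict _) (measurableSet_singleton b),
    map_apply (Finset.measurable_restrict _) (measurableSet_singleton b)]
  rcases (s.restrict (π := fun _ ↦ β) ⁻¹' {b}).eq_empty_or_nonempty with hb | ⟨x, rfl⟩
  · rw [hb, measure_empty, measure_empty]
  · rw [Finset.restrict_preimage_singleton_restrict, h]

end MeasureTheory.Measure

theorem ae_eq_condExp_comap_of_forall_setIntegral_cylinder_eq {Ω ι β : Type*}
    {mΩ : MeasurableSpace Ω} {μ : Measure Ω} [IsFiniteMeasure μ] [MeasurableSpace β] [Countable β]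
    [MeasurableSingletonClass β] {Z : Ω → ι → β} (hZ : Measurable Z) {f : Ω → ℝ}
    {G : (ι → β) → ℝ} (hf : Integrable f μ) (hf0 : 0 ≤ f) (hG : Measurable G)
    (hGZ : Integrable (fun ω ↦ G (Z ω)) μ) (hG0 : 0 ≤ G)
    (h : ∀ (s : Finset ι) (b : ι → β), ∫ ω in {ω | ∀ i ∈ s, Z ω i = b i}, f ω ∂μ =
      ∫ ω in {ω | ∀ i ∈ s, Z ω i = b i}, G (Z ω) ∂μ) :
    μ[f | MeasurableSpace.comap Z inferInstance] =ᵐ[μ] fun ω ↦ G (Z ω) := by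
  -- For `F ≥ 0`, `T ↦ ∫ ω in Z ⁻¹' T, F ω ∂μ` is the finite measure `map Z (F • μ)`.
  have hν (F : Ω → ℝ) (hF : Integrable F μ) (hF0 : 0 ≤ F) (T : Set (ι → β)) (hT : MeasurableSet T) :
      (μ.withDensity fun ω ↦ ENNReal.ofReal (F ω)).map Z T =
        ENNReal.ofReal (∫ ω in Z ⁻¹' T, F ω ∂μ) := by
    rw [Measure.map_apply hZ hT, withDensity_apply _ (hZ hT),
      ofReal_integral_eq_lintegral_ofReal hF.integrableOn (ae_of_all _ hF0)]
  have := isFiniteMeasure_withDensity_ofReal hf.2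
  have := isFiniteMeasure_withDensity_ofReal hGZ.2
  have hmap : (μ.withDensity fun ω ↦ ENNReal.ofReal (f ω)).map Z =
      (μ.withDensity fun ω ↦ ENNReal.ofReal (G (Z ω))).map Z := by
    refine Measure.ext_of_forall_cylinder_eq fun s b ↦ ?_
    have hcyl : MeasurableSet {z : ι → β | ∀ i ∈ s, z i = b i} :=
      Finset.restrict_preimage_singleton_restrict s b ▸
        Finset.measurable_restrict s (measurableSet_singleton _)
    rw [hν f hf hf0 _ hcyl, hν _ hGZ (fun ω ↦ hG0 (Z ω)) _ hcyl]
    exact congrArg ENNReal.ofReal (h s b)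
  refine (ae_eq_condExp_of_forall_setIntegral_eq hZ.comap_le hf (fun _ _ _ ↦ hGZ.integrableOn)
    ?_ (hG.comp (comap_measurable Z)).aestronglyMeasurable).symm
  rintro _ ⟨T, hT, rfl⟩ -
  have := congrArg ENNReal.toReal ((hν _ hGZ (fun ω ↦ hG0 (Z ω)) T hT).symm.trans
    (hmap ▸ hν f hf hf0 T hT))
  rwa [ENNReal.toReal_ofReal (setIntegral_nonneg (hZ hT) fun ω _ ↦ hG0 (Z ω)),
    ENNReal.toReal_ofReal (setIntegral_nonneg (hZ hT) fun ω _ ↦ hf0 ω)] at this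

instance isFiniteMeasure_bernoulliMeasure (r : ℝ) : IsFiniteMeasure (bernoulliMeasure r) := by
  refine ⟨?_⟩
  simp [_root_.bernoulliMeasure]

lemma isProbabilityMeasure_bernoulliMeasure {r : ℝ} (h0 : 0 ≤ r) (h1 : r ≤ 1) :
    IsProbabilityMeasure (bernoulliMeasure r) := by
  constructor
  simp [_root_.bernoulliMeasure, ← ENNReal.ofReal_add h0 (sub_nonneg.mpr h1)]

lemma bernoulliMeasure_singleton (r : ℝ) (b : Bool) :
    bernoulliMeasure r {b} = if b then ENNReal.ofReal r else ENNReal.ofReal (1 - r) := by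
  cases b <;> simp [_root_.bernoulliMeasure]

lemma integral_bernoulliMeasure {r : ℝ} (h0 : 0 ≤ r) (h1 : r ≤ 1) (f : Bool → ℝ) :
    ∫ b, f b ∂bernoulliMeasure r = r * f true + (1 - r) * f false := by
  simp [integral_fintype, measureReal_def, bernoulliMeasure_singleton, h0, h1]

theorem IsBernoulliProduct.eq_infinitePi {I : Type*} {r : ℝ} {μ : Measure (I → Bool)}
    [IsProbabilityMeasure (bernoulliMeasure r)] (h : IsBernoulliProduct r μ) :
    μ = Measure.infinitePi fun _ ↦ bernoulliMeasure r := by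
  have := h.1
  refine Measure.ext_of_forall_cylinder_eq fun s b ↦ ?_
  have hpi : {z : I → Bool | ∀ i ∈ s, z i = b i} = Set.pi s fun i ↦ {b i} := by ext; simp
  rw [h.2, hpi, Measure.infinitePi_pi _ fun _ _ ↦ measurableSet_singleton _]
  simp_rw [bernoulliMeasure_singleton]

noncomputable abbrev bernoulliPair (p q : ℝ) : Measure (Bool × Bool) :=
  (_root_.bernoulliMeasure p).prod (_root_.bernoulliMeasure q)

lemma integral_bernoulliPair {p q : ℝ} (hp0 : 0 ≤ p) (hp1 : p ≤ 1) (hq0 : 0 ≤ q) (hq1 : q ≤ 1)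
    (f : Bool × Bool → ℝ) :
    ∫ e, f e ∂bernoulliPair p q =
      p * (q * f (true, true) + (1 - q) * f (true, false)) +
        (1 - p) * (q * f (false, true) + (1 - q) * f (false, false)) := by
  rw [integral_prod _ .of_finite, integral_bernoulliMeasure hp0 hp1,
    integral_bernoulliMeasure hq0 hq1, integral_bernoulliMeasure hq0 hq1]

theorem IsBernoulliProduct.integral_finset_prod_pair {I : Type*} {p q : ℝ}
    {μp μq : Measure (I → Bool)} (hp0 : 0 ≤ p) (hp1 : p ≤ 1) (hq0 : 0 ≤ q) (hq1 : q ≤ 1)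
    (hμp : IsBernoulliProduct p μp) (hμq : IsBernoulliProduct q μq) (t : Finset I)
    (h : I → Bool × Bool → ℝ) :
    ∫ ω, ∏ i ∈ t, h i (ω.1 i, ω.2 i) ∂(μp.prod μq) =
      ∏ i ∈ t, ∫ e, h i e ∂(bernoulliPair p q) := by
  have := isProbabilityMeasure_bernoulliMeasure hp0 hp1
  have := isProbabilityMeasure_bernoulliMeasure hq0 hq1
  have := hμp.1
  have := hμq.1
  have hmap : (μp.prod μq).map (Prod.map t.restrict t.restrict) =
      (Measure.pi fun _ : t ↦ _root_.bernoulliMeasure p).prod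
        (Measure.pi fun _ : t ↦ _root_.bernoulliMeasure q) := by
    rw [← Measure.map_prod_map _ _ (Finset.measurable_restrict _) (Finset.measurable_restrict _),
      hμp.eq_infinitePi, hμq.eq_infinitePi, Measure.infinitePi_map_restrict,
      Measure.infinitePi_map_restrict]
  calc ∫ ω, ∏ i ∈ t, h i (ω.1 i, ω.2 i) ∂(μp.prod μq)
      = ∫ ω, (fun xy : (t → Bool) × (t → Bool) ↦ ∏ i : t, h i (xy.1 i, xy.2 i))
          (Prod.map t.restrict t.restrict ω) ∂(μp.prod μq) := by
        simp_rw [Prod.map, Finset.restrict, Finset.prod_coe_sort t fun i ↦ h i (_, _)]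
    _ = ∫ xy, ∏ i : t, h i (xy.1 i, xy.2 i)
          ∂(Measure.pi fun _ : t ↦ _root_.bernoulliMeasure p).prod
            (Measure.pi fun _ : t ↦ _root_.bernoulliMeasure q) := by
        rw [← hmap, integral_map (by fun_prop) (Measurable.of_discrete).aestronglyMeasurable]
    _ = ∫ z, ∏ i : t, h i (z i)
          ∂(Measure.pi fun _ : t ↦ bernoulliPair p q) :=
        ((measurePreserving_arrowProdEquivProdArrow Bool Bool t _ _).integral_comp' _).symm
    _ = ∏ i ∈ t, ∫ e, h i e ∂(bernoulliPair p q) := by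
        rw [integral_fintype_prod_eq_prod,
          Finset.prod_coe_sort t fun i ↦ ∫ e, h i e ∂bernoulliPair p q]

lemma ite_mod_two_eq_one_eq_one_sub_neg_one_pow_div_two (n : ℕ) :
    (if n % 2 = 1 then (1 : ℝ) else 0) = (1 - (-1) ^ n) / 2 := by
  rw [neg_one_pow_eq_pow_mod_two]
  rcases Nat.mod_two_eq_zero_or_one n with h | h <;> simp [h]

lemma abs_one_sub_two_mul_div_pow_le_one {p q : ℝ} (hp0 : 0 ≤ p) (hp1 : p ≤ 1) (hq0 : 0 ≤ q)
    (n : ℕ) : |(1 - 2 * p / (p + q - p * q)) ^ n| ≤ 1 := by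
  have hpp' : p ≤ p + q - p * q := by nlinarith
  have h2 : 2 * p / (p + q - p * q) ≤ 2 := div_le_of_le_mul₀ (by linarith) zero_le_two (by linarith)
  have h0 : 0 ≤ 2 * p / (p + q - p * q) := div_nonneg (by linarith) (by linarith)
  rw [abs_pow]
  exact pow_le_one₀ (abs_nonneg _) (abs_le.mpr ⟨by linarith, by linarith⟩)

lemma integral_mul_neg_one_pow_eq_integral_mul_pow_max {p q : ℝ} (hp0 : 0 ≤ p) (hp1 : p ≤ 1)
    (hq0 : 0 ≤ q) (hq1 : q ≤ 1) (u : Bool → ℝ) :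
    ∫ e, u (max e.1 e.2) * (-1) ^ e.1.toNat ∂bernoulliPair p q =
      ∫ e, u (max e.1 e.2) * (1 - 2 * p / (p + q - p * q)) ^ (max e.1 e.2).toNat
        ∂bernoulliPair p q := by
  have hmul : (p + q - p * q) * (2 * p / (p + q - p * q)) = 2 * p := by
    rcases eq_or_ne (p + q - p * q) 0 with h | h
    · have : p = 0 := by nlinarith
      simp [this]
    · field_simp
  rw [integral_bernoulliPair hp0 hp1 hq0 hq1, integral_bernoulliPair hp0 hp1 hq0 hq1]
  simp only [max_self, Bool.max_eq_or, Bool.true_or, Bool.or_true,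
    Bool.toNat_true, Bool.toNat_false, pow_one, pow_zero]
  linear_combination (u true) * hmul

lemma integral_prod_max_mul_neg_one_pow_eq {I : Type*} {p q : ℝ} {μp μq : Measure (I → Bool)}
    (hp0 : 0 ≤ p) (hp1 : p ≤ 1) (hq0 : 0 ≤ q) (hq1 : q ≤ 1)
    (hμp : IsBernoulliProduct p μp) (hμq : IsBernoulliProduct q μq)
    (s r : Finset I) (u : I → Bool → ℝ) :
    ∫ ω, (∏ i ∈ s, u i (max (ω.1 i) (ω.2 i))) * (-1) ^ ∑ i ∈ r, (ω.1 i).toNat ∂(μp.prod μq) =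
      ∫ ω, (∏ i ∈ s, u i (max (ω.1 i) (ω.2 i))) *
        (1 - 2 * p / (p + q - p * q)) ^ ∑ i ∈ r, (max (ω.1 i) (ω.2 i)).toNat ∂(μp.prod μq) := by
  classical
  simp_rw [← Finset.prod_pow_eq_pow_sum, Finset.prod_mul_prod_eq_prod_union_ite]
  rw [IsBernoulliProduct.integral_finset_prod_pair hp0 hp1 hq0 hq1 hμp hμq (s ∪ r)
      fun i e ↦ (if i ∈ s then u i (max e.1 e.2) else 1) * (if i ∈ r then (-1) ^ e.1.toNat else 1),
    IsBernoulliProduct.integral_finset_prod_pair hp0 hp1 hq0 hq1 hμp hμq (s ∪ r)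
      fun i e ↦ (if i ∈ s then u i (max e.1 e.2) else 1) *
        (if i ∈ r then (1 - 2 * p / (p + q - p * q)) ^ (max e.1 e.2).toNat else 1)]
  refine Finset.prod_congr rfl fun i _ ↦ ?_
  by_cases hi : i ∈ r
  · simpa only [hi, if_true] using integral_mul_neg_one_pow_eq_integral_mul_pow_max hp0 hp1 hq0 hq1
      fun m ↦ if i ∈ s then u i m else 1
  · simp only [hi, if_false]

lemma setIntegral_cylinder_neg_one_pow_eq {I : Type*} {p q : ℝ} {μp μq : Measure (I → Bool)}
    (hp0 : 0 ≤ p) (hp1 : p ≤ 1) (hq0 : 0 ≤ q) (hq1 : q ≤ 1)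
    (hμp : IsBernoulliProduct p μp) (hμq : IsBernoulliProduct q μq)
    (s : Finset I) (b : I → Bool) (r : Finset I) :
    ∫ ω in {ω | ∀ i ∈ s, max (ω.1 i) (ω.2 i) = b i}, (-1) ^ ∑ i ∈ r, (ω.1 i).toNat
        ∂(μp.prod μq) =
      ∫ ω in {ω | ∀ i ∈ s, max (ω.1 i) (ω.2 i) = b i},
        (1 - 2 * p / (p + q - p * q)) ^ ∑ i ∈ r, (max (ω.1 i) (ω.2 i)).toNat ∂(μp.prod μq) := by
  have hind (F : (I → Bool) × (I → Bool) → ℝ) :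
      {ω | ∀ i ∈ s, max (ω.1 i) (ω.2 i) = b i}.indicator F =
        fun ω ↦ (∏ i ∈ s, if max (ω.1 i) (ω.2 i) = b i then 1 else 0) * F ω := by
    ext ω
    simp [Set.indicator_apply, Finset.prod_boole]
  have hA : MeasurableSet {ω : (I → Bool) × (I → Bool) | ∀ i ∈ s, max (ω.1 i) (ω.2 i) = b i} := by
    simp_rw [Set.ofPred_forall]
    exact .biInter s.countable_toSet fun i _ ↦ measurableSet_eq_fun (by fun_prop) (by fun_prop)
  rw [← integral_indicator hA, ← integral_indicator hA, hind, hind]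
  exact integral_prod_max_mul_neg_one_pow_eq hp0 hp1 hq0 hq1 hμp hμq s r
    fun i m ↦ if m = b i then 1 else 0

lemma setIntegral_cylinder_parity_eq {I : Type*} {p q : ℝ} {μp μq : Measure (I → Bool)}
    (hp0 : 0 ≤ p) (hp1 : p ≤ 1) (hq0 : 0 ≤ q) (hq1 : q ≤ 1)
    (hμp : IsBernoulliProduct p μp) (hμq : IsBernoulliProduct q μq)
    (s : Finset I) (b : I → Bool) (r : Finset I) :
    ∫ ω in {ω | ∀ i ∈ s, max (ω.1 i) (ω.2 i) = b i},
        (if (∑ i ∈ r, (ω.1 i).toNat) % 2 = 1 then (1 : ℝ) else 0) ∂(μp.prod μq) =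
      ∫ ω in {ω | ∀ i ∈ s, max (ω.1 i) (ω.2 i) = b i},
        (1 - (1 - 2 * p / (p + q - p * q)) ^ ∑ i ∈ r, (max (ω.1 i) (ω.2 i)).toNat) / 2
          ∂(μp.prod μq) := by
  have := hμp.1
  have := hμq.1
  have hsign : Integrable (fun ω : (I → Bool) × (I → Bool) ↦
      (-1 : ℝ) ^ ∑ i ∈ r, (ω.1 i).toNat) (μp.prod μq) :=
    .of_bound (by fun_prop) 1 (ae_of_all _ fun ω ↦ by simp)
  have hpow : Integrable (fun ω : (I → Bool) × (I → Bool) ↦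
      (1 - 2 * p / (p + q - p * q)) ^ ∑ i ∈ r, (max (ω.1 i) (ω.2 i)).toNat) (μp.prod μq) :=
    .of_bound (by fun_prop) 1 (ae_of_all _ fun ω ↦ by
      rw [Real.norm_eq_abs]; exact abs_one_sub_two_mul_div_pow_le_one hp0 hp1 hq0 _)
  simp_rw [ite_mod_two_eq_one_eq_one_sub_neg_one_pow_div_two]
  rw [integral_div, integral_div, integral_sub (integrable_const 1).integrableOn hsign.integrableOn,
    integral_sub (integrable_const 1).integrableOn hpow.integrableOn,
    setIntegral_cylinder_neg_one_pow_eq hp0 hp1 hq0 hq1 hμp hμq]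

theorem condexp_parity_general (p q : ℝ) (hp : 0 < p) (hp1 : p < 1) (hq : 0 < q) (hq1 : q < 1)
    (μp μq : Measure (ℕ → Bool))
    (hμp : IsBernoulliProduct p μp) (hμq : IsBernoulliProduct q μq)
    (k : ℕ) :
    (μp.prod μq)[(fun ω : (ℕ → Bool) × (ℕ → Bool) =>
        if (∑ i ∈ Finset.range k, (ω.1 i).toNat) % 2 = 1 then (1:ℝ) else 0) |
      MeasurableSpace.comap
        (fun ω : (ℕ → Bool) × (ℕ → Bool) => fun i => max (ω.1 i) (ω.2 i)) inferInstance]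
      =ᵐ[μp.prod μq]
    fun ω => (1 - (1 - 2 * p / (p + q - p * q)) ^
        (∑ i ∈ Finset.range k, (max (ω.1 i) (ω.2 i)).toNat)) / 2 := by
  have := hμp.1
  have := hμq.1
  have hpow := abs_one_sub_two_mul_div_pow_le_one hp.le hp1.le hq.le
  refine ae_eq_condExp_comap_of_forall_setIntegral_cylinder_eq (by fun_prop)
    (G := fun z ↦ (1 - (1 - 2 * p / (p + q - p * q)) ^ ∑ i ∈ Finset.range k, (z i).toNat) / 2)
    ?_ ?_ (by fun_prop) ?_ ?_
    fun s b ↦ setIntegral_cylinder_parity_eq hp.le hp1.le hq.le hq1.le hμp hμq s b _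
  · refine .of_bound ?_ 1 (ae_of_all _ fun ω ↦ ?_)
    · exact ((Measurable.of_discrete (f := fun n : ℕ ↦ if n % 2 = 1 then (1 : ℝ) else 0)).comp
        (by fun_prop)).aestronglyMeasurable
    · split_ifs <;> simp
  · intro ω
    dsimp only
    split_ifs <;> simp
  · refine .of_bound (by fun_prop) 1 (ae_of_all _ fun ω ↦ ?_)
    have := abs_le.mp (hpow (∑ i ∈ Finset.range k, (max (ω.1 i) (ω.2 i)).toNat))
    rw [Real.norm_eq_abs, abs_le]
    constructor <;> linarith
  · intro z
    have := abs_le.mp (hpow (∑ i ∈ Finset.range k, (z i).toNat))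
    rw [Pi.zero_apply]
    linarith

/-- With `X ~ Bernoulli(p)^ℕ` and `Y ~ Bernoulli(q)^ℕ` independent and `p' = p + q - pq`,
the conditional expectation of the parity `a_k` of the first `k` coordinates of `X` given
`σ(max(X,Y))` equals `(1 - (1 - 2p/p')^{ℓ_k})/2` a.s., where `ℓ_k = Σ_{i<k} max(X_i,Y_i)`. -/
theorem condexp_parity (p q : ℝ) (hp : 0 < p) (hp1 : p < 1) (hq : 0 < q) (hq1 : q < 1)
    (μp μq : Measure (ℕ → Bool))
    (hμp : IsBernoulliProduct p μp) (hμq : IsBernoulliProduct q μq)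
    (k : ℕ) (hk : 1 ≤ k) :
    (μp.prod μq)[(fun ω : (ℕ → Bool) × (ℕ → Bool) =>
        if (∑ i ∈ Finset.range k, (ω.1 i).toNat) % 2 = 1 then (1:ℝ) else 0) |
      MeasurableSpace.comap
        (fun ω : (ℕ → Bool) × (ℕ → Bool) => fun i => max (ω.1 i) (ω.2 i)) inferInstance]
      =ᵐ[μp.prod μq]
    fun ω => (1 - (1 - 2 * p / (p + q - p * q)) ^
        (∑ i ∈ Finset.range k, (max (ω.1 i) (ω.2 i)).toNat)) / 2 :=
  condexp_parity_general p q hp hp1 hq hq1 μp μq hμp hμq k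
end
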